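/- Computable cross norm criterion: Let ρ be a separable density matrix on ℂ^{d_A} ⊗ ℂ^{d_B} (i.e., ρ = Σ_k p_k σ_k ⊗ τ_k for some finitely many density matrices σ_k on ℂ^{d_A}, τ_k on ℂ^{d_B} and weights p_k ≥ 0 with Σ_k p_k = 1). Suppose ρ admits an operator Schmidt decomposition ρ = Σ_{i=1}^r λ_i A_i ⊗ B_i, where λ_i ≥ 0 and {A_i} and {B_i} are orthonormal families of matrices with respect to the Hilbert–Schmidt inner product (Tr(A_iᴴ A_j) = δ_{ij} and Tr(B_iᴴ B_j) = δ_{ij}). Then Σ_{i=1}^r λ_i ≤ 1. -/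

import Mathlib

open Matrix Kronecker ComplexOrder

/-- Trace norm `‖X‖_tr = Tr √(X Xᴴ)`. -/
noncomputable def traceNorm {m n : Type*} [Fintype m] [Fintype n] [DecidableEq m]
    (X : Matrix m n ℂ) : ℝ :=
  (((Matrix.posSemidef_self_mul_conjTranspose X).1.eigenvectorUnitary.1 *
      diagonal (((↑) : ℝ → ℂ) ∘ Real.sqrt ∘ (Matrix.posSemidef_self_mul_conjTranspose X).1.eigenvalues) *
      (star (Matrix.posSemidef_self_mul_conjTranspose X).1.eigenvectorUnitary : Matrix m m ℂ)).trace).re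

/-- A density matrix: positive semidefinite with trace 1. -/
def IsDensityMatrix {n : Type*} [Fintype n] (ρ : Matrix n n ℂ) : Prop :=
  ρ.PosSemidef ∧ ρ.trace = 1

/-- The realignment map: `R(ρ)_{(i,j),(k,l)} = ρ_{(i,k),(j,l)}`. -/
def realign {dA dB : ℕ} (ρ : Matrix (Fin dA × Fin dB) (Fin dA × Fin dB) ℂ) :
    Matrix (Fin dA × Fin dA) (Fin dB × Fin dB) ℂ :=
  fun p q => ρ (p.1, q.1) (p.2, q.2)

/-- Partial transpose on the second subsystem: `(ρ^{T₂})_{(i,k),(j,l)} = ρ_{(i,l),(j,k)}`. -/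
def ptranspose2 {d : ℕ} (ρ : Matrix (Fin d × Fin d) (Fin d × Fin d) ℂ) :
    Matrix (Fin d × Fin d) (Fin d × Fin d) ℂ :=
  fun p q => ρ (p.1, q.2) (q.1, p.2)

/-- The swap (exchange) operator `F_{(i,k),(j,l)} = δ_{il} δ_{kj}`. -/
def swapOp (d : ℕ) : Matrix (Fin d × Fin d) (Fin d × Fin d) ℂ :=
  fun p q => if p.1 = q.2 ∧ p.2 = q.1 then 1 else 0

/-- The unnormalized maximally entangled projector `(|Ω⟩⟨Ω|)_{(i,k),(j,l)} = δ_{ik} δ_{jl}`. -/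
def omegaProj (d : ℕ) : Matrix (Fin d × Fin d) (Fin d × Fin d) ℂ :=
  fun p q => if p.1 = p.2 ∧ q.1 = q.2 then 1 else 0

/-- Separability: `ρ` is a finite convex combination of products of density matrices. -/
def IsSeparableState {dA dB : ℕ} (ρ : Matrix (Fin dA × Fin dB) (Fin dA × Fin dB) ℂ) : Prop :=
  ∃ (m : ℕ) (p : Fin m → ℝ) (σ : Fin m → Matrix (Fin dA) (Fin dA) ℂ)
    (τ : Fin m → Matrix (Fin dB) (Fin dB) ℂ),
    (∀ k, 0 ≤ p k) ∧ (∑ k, p k = 1) ∧ (∀ k, IsDensityMatrix (σ k)) ∧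
    (∀ k, IsDensityMatrix (τ k)) ∧ ρ = ∑ k, (p k : ℂ) • (σ k ⊗ₖ τ k)

/-! Pair `ρ` with `∑ i, A i ⊗ₖ B i` in the Hilbert–Schmidt inner product. By orthonormality the
Schmidt decomposition makes this pairing `∑ i, λ i`. On a product state `σ ⊗ₖ τ` the pairing is
`∑ i, ⟪A i, σ⟫ ⟪B i, τ⟫`, which Cauchy–Schwarz and Bessel's inequality bound by `‖σ‖₂ ‖τ‖₂`, and
`‖σ‖₂ ≤ Tr σ = 1` for a density matrix since `Tr σ² = ∑ μ² ≤ (∑ μ)²` over its eigenvalues `μ ≥ 0`.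
A separable state is a convex combination of product states, so its pairing has real part `≤ 1`. -/

open scoped InnerProductSpace

section
variable {𝕜 ι E F : Type*} [RCLike 𝕜] [NormedAddCommGroup E] [InnerProductSpace 𝕜 E]
  [NormedAddCommGroup F] [InnerProductSpace 𝕜 F]

lemma Orthonormal.norm_sum_inner_mul_inner_le {v : ι → E} {w : ι → F} (hv : Orthonormal 𝕜 v)
    (hw : Orthonormal 𝕜 w) (s : Finset ι) (x : E) (y : F) :
    ‖∑ i ∈ s, ⟪v i, x⟫_𝕜 * ⟪w i, y⟫_𝕜‖ ≤ ‖x‖ * ‖y‖ := by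
  have hx : √(∑ i ∈ s, ‖⟪v i, x⟫_𝕜‖ ^ 2) ≤ ‖x‖ :=
    (Real.sqrt_le_sqrt (hv.sum_inner_products_le x)).trans_eq (Real.sqrt_sq (norm_nonneg x))
  have hy : √(∑ i ∈ s, ‖⟪w i, y⟫_𝕜‖ ^ 2) ≤ ‖y‖ :=
    (Real.sqrt_le_sqrt (hw.sum_inner_products_le y)).trans_eq (Real.sqrt_sq (norm_nonneg y))
  calc ‖∑ i ∈ s, ⟪v i, x⟫_𝕜 * ⟪w i, y⟫_𝕜‖
      ≤ ∑ i ∈ s, ‖⟪v i, x⟫_𝕜‖ * ‖⟪w i, y⟫_𝕜‖ := norm_sum_le_of_le s fun i _ => norm_mul_le _ _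
    _ ≤ √(∑ i ∈ s, ‖⟪v i, x⟫_𝕜‖ ^ 2) * √(∑ i ∈ s, ‖⟪w i, y⟫_𝕜‖ ^ 2) :=
        Real.sum_mul_le_sqrt_mul_sqrt s _ _
    _ ≤ ‖x‖ * ‖y‖ := mul_le_mul hx hy (Real.sqrt_nonneg _) (norm_nonneg x)

end

namespace Matrix

variable {𝕜 ι : Type*} [RCLike 𝕜] {l m n p : Type*} [Fintype l] [Fintype m] [Fintype n]
  [Fintype p]

lemma IsHermitian.trace_mul_self [DecidableEq n] {A : Matrix n n 𝕜} (hA : A.IsHermitian) :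
    (A * A).trace = ∑ i, (hA.eigenvalues i : 𝕜) ^ 2 := by
  conv_lhs => rw [hA.spectral_theorem, ← map_mul, Unitary.conjStarAlgAut_apply, trace_mul_cycle,
    Unitary.coe_star_mul_self, one_mul, diagonal_mul_diagonal, trace_diagonal]
  simp [sq]

lemma PosSemidef.re_trace_mul_self_le {A : Matrix n n 𝕜} (hA : A.PosSemidef) :
    RCLike.re (A * A).trace ≤ RCLike.re A.trace ^ 2 := by
  classical
  rw [hA.1.trace_mul_self, hA.1.trace_eq_sum_eigenvalues]
  simp only [map_sum, ← RCLike.ofReal_pow, RCLike.ofReal_re]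
  exact Finset.sum_sq_le_sq_sum_of_nonneg fun i _ => hA.eigenvalues_nonneg i

def hsVec (A : Matrix m n 𝕜) : EuclideanSpace 𝕜 (n × m) :=
  WithLp.toLp 2 A.vec

lemma inner_hsVec (A B : Matrix m n 𝕜) : ⟪hsVec A, hsVec B⟫_𝕜 = (Aᴴ * B).trace := by
  rw [hsVec, hsVec, EuclideanSpace.inner_toLp_toLp, dotProduct_comm, star_vec_dotProduct_vec]

lemma norm_hsVec_sq (A : Matrix m n 𝕜) : ‖hsVec A‖ ^ 2 = RCLike.re (Aᴴ * A).trace := by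
  rw [← inner_self_eq_norm_sq (𝕜 := 𝕜), inner_hsVec]

lemma orthonormal_hsVec_iff [DecidableEq ι] {A : ι → Matrix m n 𝕜} :
    Orthonormal 𝕜 (fun i => hsVec (A i)) ↔
      ∀ i j, ((A i)ᴴ * A j).trace = if i = j then 1 else 0 := by
  simp only [orthonormal_iff_ite, inner_hsVec]

lemma PosSemidef.norm_hsVec_le {A : Matrix n n 𝕜} (hA : A.PosSemidef) :
    ‖hsVec A‖ ≤ RCLike.re A.trace := by
  refine le_of_pow_le_pow_left₀ two_ne_zero (RCLike.nonneg_iff.mp hA.trace_nonneg).1 ?_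
  rw [norm_hsVec_sq, hA.1.eq]
  exact hA.re_trace_mul_self_le

lemma trace_conjTranspose_kronecker_mul_kronecker (A C : Matrix l m 𝕜) (B D : Matrix n p 𝕜) :
    ((A ⊗ₖ B)ᴴ * (C ⊗ₖ D)).trace = (Aᴴ * C).trace * (Bᴴ * D).trace := by
  rw [conjTranspose_kronecker, ← mul_kronecker_mul, trace_kronecker]

variable [Fintype ι]

def schmidtPairing (A : ι → Matrix l m 𝕜) (B : ι → Matrix n p 𝕜)
    (X : Matrix (l × n) (m × p) 𝕜) : 𝕜 :=
  ∑ i, ((A i ⊗ₖ B i)ᴴ * X).trace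

variable (A : ι → Matrix l m 𝕜) (B : ι → Matrix n p 𝕜)

lemma schmidtPairing_sum_smul {κ : Type*} (s : Finset κ) (c : κ → 𝕜)
    (X : κ → Matrix (l × n) (m × p) 𝕜) :
    schmidtPairing A B (∑ k ∈ s, c k • X k) = ∑ k ∈ s, c k * schmidtPairing A B (X k) := by
  simp only [schmidtPairing, Matrix.mul_sum, Matrix.mul_smul, trace_sum, trace_smul, smul_eq_mul,
    Finset.mul_sum]
  exact Finset.sum_comm

lemma schmidtPairing_kronecker (X : Matrix l m 𝕜) (Y : Matrix n p 𝕜) :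
    schmidtPairing A B (X ⊗ₖ Y) = ∑ i, ⟪hsVec (A i), hsVec X⟫_𝕜 * ⟪hsVec (B i), hsVec Y⟫_𝕜 := by
  simp only [schmidtPairing, trace_conjTranspose_kronecker_mul_kronecker, inner_hsVec]

lemma schmidtPairing_kronecker_self [DecidableEq ι]
    (hA : Orthonormal 𝕜 fun i => hsVec (A i)) (hB : Orthonormal 𝕜 fun i => hsVec (B i)) (j : ι) :
    schmidtPairing A B (A j ⊗ₖ B j) = 1 := by
  simp [schmidtPairing_kronecker, orthonormal_iff_ite.mp hA, orthonormal_iff_ite.mp hB]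

lemma norm_schmidtPairing_kronecker_le
    (hA : Orthonormal 𝕜 fun i => hsVec (A i)) (hB : Orthonormal 𝕜 fun i => hsVec (B i))
    (X : Matrix l m 𝕜) (Y : Matrix n p 𝕜) :
    ‖schmidtPairing A B (X ⊗ₖ Y)‖ ≤ ‖hsVec X‖ * ‖hsVec Y‖ := by
  rw [schmidtPairing_kronecker]
  exact hA.norm_sum_inner_mul_inner_le hB _ _ _

end Matrix

lemma IsDensityMatrix.norm_hsVec_le_one {n : Type*} [Fintype n] {σ : Matrix n n ℂ}
    (hσ : IsDensityMatrix σ) : ‖hsVec σ‖ ≤ 1 := by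
  simpa [hσ.2] using hσ.1.norm_hsVec_le

lemma IsSeparableState.re_schmidtPairing_le_one {dA dB : ℕ} {ι : Type*} [Fintype ι]
    {ρ : Matrix (Fin dA × Fin dB) (Fin dA × Fin dB) ℂ} (hρ : IsSeparableState ρ)
    {A : ι → Matrix (Fin dA) (Fin dA) ℂ} {B : ι → Matrix (Fin dB) (Fin dB) ℂ}
    (hA : Orthonormal ℂ fun i => hsVec (A i)) (hB : Orthonormal ℂ fun i => hsVec (B i)) :
    (schmidtPairing A B ρ).re ≤ 1 := by
  obtain ⟨m, p, σ, τ, hp, hp_sum, hσ, hτ, rfl⟩ := hρ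
  have h_product (k : Fin m) : (schmidtPairing A B (σ k ⊗ₖ τ k)).re ≤ 1 :=
    calc (schmidtPairing A B (σ k ⊗ₖ τ k)).re
        ≤ ‖schmidtPairing A B (σ k ⊗ₖ τ k)‖ := Complex.re_le_norm _
      _ ≤ ‖hsVec (σ k)‖ * ‖hsVec (τ k)‖ := norm_schmidtPairing_kronecker_le A B hA hB _ _
      _ ≤ 1 := mul_le_one₀ (hσ k).norm_hsVec_le_one (norm_nonneg _) (hτ k).norm_hsVec_le_one
  rw [schmidtPairing_sum_smul, Complex.re_sum, ← hp_sum]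
  refine Finset.sum_le_sum fun k _ => ?_
  rw [Complex.re_ofReal_mul]
  exact mul_le_of_le_one_right (hp k) (h_product k)

theorem computable_cross_norm_criterion_general {dA dB : ℕ}
    (ρ : Matrix (Fin dA × Fin dB) (Fin dA × Fin dB) ℂ)
    (hsep : IsSeparableState ρ)
    (r : ℕ) (lam : Fin r → ℝ)
    (A : Fin r → Matrix (Fin dA) (Fin dA) ℂ)
    (B : Fin r → Matrix (Fin dB) (Fin dB) ℂ)
    (hA : ∀ i j, ((A i)ᴴ * A j).trace = if i = j then 1 else 0)
    (hB : ∀ i j, ((B i)ᴴ * B j).trace = if i = j then 1 else 0)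
    (hdec : ρ = ∑ i, (lam i : ℂ) • (A i ⊗ₖ B i)) :
    ∑ i, lam i ≤ 1 := by
  have hA' := orthonormal_hsVec_iff.mpr hA
  have hB' := orthonormal_hsVec_iff.mpr hB
  have h_pairing : schmidtPairing A B ρ = ∑ i, lam i := by
    rw [hdec, schmidtPairing_sum_smul]
    simp only [schmidtPairing_kronecker_self A B hA' hB', mul_one]
    rw [Complex.ofReal_sum]
  simpa [h_pairing] using hsep.re_schmidtPairing_le_one hA' hB'

/-- **Computable cross norm criterion.** If a separable density matrix admits an operator
Schmidt decomposition `ρ = Σ_i λ_i A_i ⊗ B_i` with `λ_i ≥ 0` and orthonormal families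
`{A_i}`, `{B_i}`, then `Σ_i λ_i ≤ 1`. -/
theorem computable_cross_norm_criterion {dA dB : ℕ}
    (ρ : Matrix (Fin dA × Fin dB) (Fin dA × Fin dB) ℂ)
    (hρ : IsDensityMatrix ρ) (hsep : IsSeparableState ρ)
    (r : ℕ) (lam : Fin r → ℝ)
    (A : Fin r → Matrix (Fin dA) (Fin dA) ℂ)
    (B : Fin r → Matrix (Fin dB) (Fin dB) ℂ)
    (hlam : ∀ i, 0 ≤ lam i)
    (hA : ∀ i j, ((A i)ᴴ * A j).trace = if i = j then 1 else 0)
    (hB : ∀ i j, ((B i)ᴴ * B j).trace = if i = j then 1 else 0)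
    (hdec : ρ = ∑ i, (lam i : ℂ) • (A i ⊗ₖ B i)) :
    ∑ i, lam i ≤ 1 :=
  computable_cross_norm_criterion_general ρ hsep r lam A B hA hB hdec
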